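/- The inversion φ : ℝ⁴ \ {0} → ℝ⁴ defined by φ(x) = x/|x|² is a proper biharmonic map: each component function φ^a(x) = x_a/|x|² satisfies Δ²φ^a = 0 on ℝ⁴ \ {0}, but Δφ ≢ 0. -/

import Mathlib

/-- The Euclidean Laplacian of a real-valued function on `ℝ^m`. -/
noncomputable def lap {m : ℕ} (u : EuclideanSpace ℝ (Fin m) → ℝ)
    (x : EuclideanSpace ℝ (Fin m)) : ℝ :=
  ∑ i : Fin m,
    fderiv ℝ (fun y => fderiv ℝ u y (EuclideanSpace.single i 1)) x
      (EuclideanSpace.single i 1)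

open EuclideanSpace

abbrev E4 := EuclideanSpace ℝ (Fin 4)
noncomputable def e (i : Fin 4) : E4 := EuclideanSpace.single i (1:ℝ)
lemma e_def (i : Fin 4) : EuclideanSpace.single i (1:ℝ) = e i := rfl

lemma normsq_ne (x : E4) (hx : x ≠ 0) : ‖x‖ ^ 2 ≠ 0 :=
  pow_ne_zero 2 (norm_ne_zero_iff.mpr hx)

lemma hQ (x : E4) : HasFDerivAt (fun y : E4 => ‖y‖^2) (2 • innerSL ℝ x) x :=
  (hasStrictFDerivAt_norm_sq x).hasFDerivAt

/-- first-derivative components of `u a` -/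
noncomputable def g (a i : Fin 4) : E4 → ℝ := fun y =>
  (if a = i then (1:ℝ) else 0) * (‖y‖^2)⁻¹ - 2 * (y a * y i * (‖y‖^2 * ‖y‖^2)⁻¹)

/-- `-4 x_a/|x|^4`, the Laplacian of `u a` -/
noncomputable def w (a : Fin 4) : E4 → ℝ := fun y => -4 * (y a * (‖y‖^2 * ‖y‖^2)⁻¹)

/-- first-derivative components of `w a` -/
noncomputable def hf (a i : Fin 4) : E4 → ℝ := fun y =>
  -4 * ((if a = i then (1:ℝ) else 0) * (‖y‖^2 * ‖y‖^2)⁻¹)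
    + 16 * (y a * y i * (‖y‖^2 * ‖y‖^2 * ‖y‖^2)⁻¹)

lemma pd_u (a i : Fin 4) (x : E4) (hx : x ≠ 0) :
    fderiv ℝ (fun y : E4 => y a / ‖y‖ ^ 2) x (e i) = g a i x := by
  have hiQ := (hasFDerivAt_inv' (𝕜 := ℝ) (normsq_ne x hx)).comp x (hQ x)
  have h : HasFDerivAt (fun y : E4 => y a * ((‖y‖^2))⁻¹) _ x :=
    (EuclideanSpace.proj a : E4 →L[ℝ] ℝ).hasFDerivAt.mul hiQ
  have heq : (fun y : E4 => y a / ‖y‖ ^ 2) = fun y : E4 => y a * ((‖y‖^2))⁻¹ := by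
    funext y; rw [div_eq_mul_inv]
  rw [heq, h.fderiv]
  have h2 : ‖x‖ ≠ 0 := norm_ne_zero_iff.mpr hx
  simp [g, e, EuclideanSpace.single_apply, real_inner_smul_left, EuclideanSpace.inner_single_right]
  rcases eq_or_ne a i with rfl | hne
  · simp; field_simp; ring
  · simp [hne, Ne.symm hne]; field_simp

lemma pd_g (a i : Fin 4) (x : E4) (hx : x ≠ 0) :
    fderiv ℝ (g a i) x (e i)
      = -4 * (if a = i then (1:ℝ) else 0) * x i / ‖x‖^4 - 2 * x a / ‖x‖^4
        + 8 * x a * x i^2 / ‖x‖^6 := by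
  have hiQ := (hasFDerivAt_inv' (𝕜 := ℝ) (normsq_ne x hx)).comp x (hQ x)
  have hQ2 := (hQ x).mul (hQ x)
  have hne2 : ‖x‖^2 * ‖x‖^2 ≠ 0 := mul_ne_zero (normsq_ne x hx) (normsq_ne x hx)
  have hiQ2 := (hasFDerivAt_inv' (𝕜 := ℝ) hne2).comp x hQ2
  have h : HasFDerivAt (g a i) _ x :=
    (hiQ.const_mul (if a = i then (1:ℝ) else 0)).sub
      ((((EuclideanSpace.proj a : E4 →L[ℝ] ℝ).hasFDerivAt.mul
        (EuclideanSpace.proj i : E4 →L[ℝ] ℝ).hasFDerivAt).mul hiQ2).const_mul 2)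
  rw [h.fderiv]
  have h2 : ‖x‖ ≠ 0 := norm_ne_zero_iff.mpr hx
  simp [e, EuclideanSpace.single_apply, real_inner_smul_left, EuclideanSpace.inner_single_right]
  rcases eq_or_ne a i with rfl | hne
  · simp; field_simp; simp [EuclideanSpace.inner_single_right]; ring
  · simp [hne, Ne.symm hne]; field_simp; ring

lemma pd_w (a i : Fin 4) (x : E4) (hx : x ≠ 0) :
    fderiv ℝ (w a) x (e i) = hf a i x := by
  have hQ2 := (hQ x).mul (hQ x)
  have hne2 : ‖x‖^2 * ‖x‖^2 ≠ 0 := mul_ne_zero (normsq_ne x hx) (normsq_ne x hx)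
  have hiQ2 := (hasFDerivAt_inv' (𝕜 := ℝ) hne2).comp x hQ2
  have h : HasFDerivAt (w a) _ x :=
    (((EuclideanSpace.proj a : E4 →L[ℝ] ℝ).hasFDerivAt.mul hiQ2).const_mul (-4))
  rw [h.fderiv]
  have h2 : ‖x‖ ≠ 0 := norm_ne_zero_iff.mpr hx
  simp [hf, e, EuclideanSpace.single_apply, real_inner_smul_left, EuclideanSpace.inner_single_right]
  rcases eq_or_ne a i with rfl | hne
  · simp; field_simp; ring
  · simp [hne, Ne.symm hne]; field_simp; ring

set_option maxHeartbeats 1000000 in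
lemma pd_h (a i : Fin 4) (x : E4) (hx : x ≠ 0) :
    fderiv ℝ (hf a i) x (e i)
      = 16 * (if a = i then (1:ℝ) else 0) * x i / ‖x‖^6
        + 16 * ((if a = i then (1:ℝ) else 0) * x i + x a) / ‖x‖^6
        - 96 * x a * x i^2 / ‖x‖^8 := by
  have hQ2 := (hQ x).mul (hQ x)
  have hQ3 := ((hQ x).mul (hQ x)).mul (hQ x)
  have hne2 : ‖x‖^2 * ‖x‖^2 ≠ 0 := mul_ne_zero (normsq_ne x hx) (normsq_ne x hx)
  have hne3 : ‖x‖^2 * ‖x‖^2 * ‖x‖^2 ≠ 0 := mul_ne_zero hne2 (normsq_ne x hx)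
  have hiQ2 := (hasFDerivAt_inv' (𝕜 := ℝ) hne2).comp x hQ2
  have hiQ3 := (hasFDerivAt_inv' (𝕜 := ℝ) hne3).comp x hQ3
  have h : HasFDerivAt (hf a i) _ x :=
    ((hiQ2.const_mul (if a = i then (1:ℝ) else 0)).const_mul (-4)).add
      ((((EuclideanSpace.proj a : E4 →L[ℝ] ℝ).hasFDerivAt.mul
        (EuclideanSpace.proj i : E4 →L[ℝ] ℝ).hasFDerivAt).mul hiQ3).const_mul 16)
  rw [h.fderiv]
  have h2 : ‖x‖ ≠ 0 := norm_ne_zero_iff.mpr hx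
  simp [e, EuclideanSpace.single_apply, real_inner_smul_left, EuclideanSpace.inner_single_right]
  rcases eq_or_ne a i with rfl | hne
  · simp; field_simp; simp [EuclideanSpace.inner_single_right]; ring
  · simp [hne, Ne.symm hne]; field_simp; ring


lemma lap_congr {f g : E4 → ℝ} (h : ∀ y : E4, y ≠ 0 → f y = g y) {x : E4} (hx : x ≠ 0) :
    lap f x = lap g x := by
  simp only [lap]
  refine Finset.sum_congr rfl fun i _ => ?_
  have h1 : ∀ y : E4, y ≠ 0 → fderiv ℝ f y = fderiv ℝ g y := by
    intro y hy
    refine Filter.EventuallyEq.fderiv_eq ?_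
    filter_upwards [isOpen_ne.eventually_mem hy] with z hz
    exact h z hz
  have h2 : (fun y : E4 => fderiv ℝ f y (EuclideanSpace.single i 1))
      =ᶠ[nhds x] (fun y : E4 => fderiv ℝ g y (EuclideanSpace.single i 1)) := by
    filter_upwards [isOpen_ne.eventually_mem hx] with z hz
    rw [h1 z hz]
  rw [h2.fderiv_eq]

lemma sumsq (x : E4) : x 0 ^ 2 + x 1 ^ 2 + x 2 ^ 2 + x 3 ^ 2 = ‖x‖ ^ 2 := by
  rw [EuclideanSpace.norm_eq, Real.sq_sqrt (by positivity)]
  simp [Fin.sum_univ_four]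

set_option maxHeartbeats 1000000 in
lemma lap1 (a : Fin 4) (x : E4) (hx : x ≠ 0) :
    lap (fun y => y a / ‖y‖ ^ 2) x = -4 * x a / ‖x‖ ^ 4 := by
  have key : ∀ i : Fin 4,
      fderiv ℝ (fun y : E4 => fderiv ℝ (fun y' : E4 => y' a / ‖y'‖^2) y (e i)) x (e i)
        = fderiv ℝ (g a i) x (e i) := by
    intro i
    have hEv : (fun y : E4 => fderiv ℝ (fun y' : E4 => y' a / ‖y'‖^2) y (e i))
        =ᶠ[nhds x] g a i := by
      filter_upwards [isOpen_ne.eventually_mem hx] with y hy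
      exact pd_u a i y hy
    rw [hEv.fderiv_eq]
  simp only [lap, e_def]
  rw [Fin.sum_univ_four, key 0, key 1, key 2, key 3,
    pd_g a 0 x hx, pd_g a 1 x hx, pd_g a 2 x hx, pd_g a 3 x hx]
  have hT : (if a = 0 then (1:ℝ) else 0) * x 0 + (if a = 1 then (1:ℝ) else 0) * x 1
      + (if a = 2 then (1:ℝ) else 0) * x 2 + (if a = 3 then (1:ℝ) else 0) * x 3 = x a := by
    fin_cases a <;> simp
  have hinv : ‖x‖ * ‖x‖⁻¹ = 1 := mul_inv_cancel₀ (norm_ne_zero_iff.mpr hx)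
  linear_combination (-4 / ‖x‖^4) * hT + (8 * x a / ‖x‖^6) * (sumsq x)
    + (8 * x a * ‖x‖⁻¹^4 * (‖x‖*‖x‖⁻¹+1)) * hinv

set_option maxHeartbeats 1000000 in
lemma lap2 (a : Fin 4) (x : E4) (hx : x ≠ 0) : lap (w a) x = 0 := by
  have key : ∀ i : Fin 4,
      fderiv ℝ (fun y : E4 => fderiv ℝ (w a) y (e i)) x (e i)
        = fderiv ℝ (hf a i) x (e i) := by
    intro i
    have hEv : (fun y : E4 => fderiv ℝ (w a) y (e i)) =ᶠ[nhds x] hf a i := by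
      filter_upwards [isOpen_ne.eventually_mem hx] with y hy
      exact pd_w a i y hy
    rw [hEv.fderiv_eq]
  simp only [lap, e_def]
  rw [Fin.sum_univ_four, key 0, key 1, key 2, key 3,
    pd_h a 0 x hx, pd_h a 1 x hx, pd_h a 2 x hx, pd_h a 3 x hx]
  have hT : (if a = 0 then (1:ℝ) else 0) * x 0 + (if a = 1 then (1:ℝ) else 0) * x 1
      + (if a = 2 then (1:ℝ) else 0) * x 2 + (if a = 3 then (1:ℝ) else 0) * x 3 = x a := by
    fin_cases a <;> simp
  have hinv : ‖x‖ * ‖x‖⁻¹ = 1 := mul_inv_cancel₀ (norm_ne_zero_iff.mpr hx)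
  linear_combination (32 / ‖x‖^6) * hT + (-96 * x a / ‖x‖^8) * (sumsq x)
    + (-96 * x a * ‖x‖⁻¹^6 * (‖x‖*‖x‖⁻¹+1)) * hinv

/-- The inversion `φ(x) = x/|x|²` of `ℝ⁴ \ {0}` is proper biharmonic:
each component `x_a/|x|²` satisfies `Δ²φ^a = 0` away from the origin, but `Δφ ≢ 0`. -/
theorem inversion_proper_biharmonic :
    (∀ a : Fin 4, ∀ x : EuclideanSpace ℝ (Fin 4), x ≠ 0 →
      lap (lap (fun y => y a / ‖y‖ ^ 2)) x = 0) ∧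
    (∃ a : Fin 4, ∃ x : EuclideanSpace ℝ (Fin 4), x ≠ 0 ∧
      lap (fun y => y a / ‖y‖ ^ 2) x ≠ 0) := by
  constructor
  · intro a x hx
    have hb : ∀ y : E4, y ≠ 0 → lap (fun y' => y' a / ‖y'‖ ^ 2) y = w a y := by
      intro y hy
      rw [lap1 a y hy]
      have h2 : ‖y‖ ≠ 0 := norm_ne_zero_iff.mpr hy
      simp only [w]
      rw [div_eq_mul_inv, show (‖y‖^2*‖y‖^2) = ‖y‖^4 from by ring]
      ring
    rw [lap_congr hb hx]
    exact lap2 a x hx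
  · refine ⟨0, e 0, ?_, ?_⟩
    · intro h
      have h0 : (e 0) 0 = (0 : E4) 0 := by rw [h]
      simp [e, EuclideanSpace.single_apply] at h0
    · have hne : e 0 ≠ (0 : E4) := by
        intro h
        have h0 : (e 0) 0 = (0 : E4) 0 := by rw [h]
        simp [e, EuclideanSpace.single_apply] at h0
      rw [lap1 0 (e 0) hne]
      have h1 : (e 0) 0 = 1 := by simp [e, EuclideanSpace.single_apply]
      have h2 : ‖e 0‖ = 1 := by
        simp [e]
      rw [h1, h2]
      norm_num
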